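/- arXiv:1007.3931 — 3 statements merged into one kernel-verified Lean document; each statement's English description precedes it below -/
import Mathlib

section
/- Let n ≥ 1 and let A, B, S be real n×n matrices such that: S is symmetric and positive definite; the product S·A is a symmetric matrix; and there exists α > 0 such that vᵀ S B v ≥ α‖v‖² for every v ∈ ℝⁿ. Then B is invertible, and every root z ∈ ℂ of the characteristic polynomial of B⁻¹A with Re z = 0 satisfies z = 0. In particular, if A is invertible, then every eigenvalue of B⁻¹A has nonzero real part. -/
/-!
If `(B⁻¹ A) v = z v` for a nonzero `v ∈ ℂⁿ`, then `A v = z B v`, so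
`v* (S A) v = z · v* (S B) v`. The left side is real because `S A` is real symmetric, while the
real part of `v* (S B) v` is the sum of the dissipative forms at `Re v` and `Im v`, hence
positive. Taking imaginary parts with `Re z = 0` forces `Im z = 0`. Dissipativity also makes `B`
injective, and when `A` is invertible `A v = 0 · B v` is impossible.
-/

open Matrix Polynomial

namespace Matrix

variable {n : Type*} [Fintype n]

lemma exists_mulVec_eq_smul_of_isRoot_charpoly {R : Type*} [CommRing R] [IsDomain R]
    [DecidableEq n] {M : Matrix n n R} {μ : R} (hμ : M.charpoly.IsRoot μ) :
    ∃ v ≠ 0, M *ᵥ v = μ • v := by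
  rw [← charpoly_toLin', ← Module.End.hasEigenvalue_iff_isRoot_charpoly] at hμ
  obtain ⟨v, hv⟩ := hμ.exists_hasEigenvector
  exact ⟨v, hv.2, hv.apply_eq_smul⟩

lemma det_ne_zero_of_forall_dotProduct_mul_mulVec_pos {R : Type*} [CommRing R]
    [IsDomain R] [Preorder R] [DecidableEq n] {S B : Matrix n n R}
    (h : ∀ x ≠ 0, 0 < x ⬝ᵥ (S * B) *ᵥ x) : B.det ≠ 0 := by
  intro hdet
  obtain ⟨v, hv, hBv⟩ := exists_mulVec_eq_zero_iff.2 hdet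
  simpa [← mulVec_mulVec, hBv] using h v hv

lemma re_star_dotProduct_map_ofReal_mulVec (M : Matrix n n ℝ) (v : n → ℂ) :
    (star v ⬝ᵥ M.map (algebraMap ℝ ℂ) *ᵥ v).re =
      (fun i => (v i).re) ⬝ᵥ M *ᵥ (fun i => (v i).re) +
        (fun i => (v i).im) ⬝ᵥ M *ᵥ (fun i => (v i).im) := by
  simp only [dotProduct, mulVec, Complex.re_sum, Finset.mul_sum, ← Finset.sum_add_distrib]
  refine Finset.sum_congr rfl fun i _ => Finset.sum_congr rfl fun j _ => ?_
  simp [Complex.mul_re, Complex.mul_im]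

lemma re_star_dotProduct_map_ofReal_mulVec_pos {M : Matrix n n ℝ}
    (hM : ∀ x ≠ 0, 0 < x ⬝ᵥ M *ᵥ x) {v : n → ℂ} (hv : v ≠ 0) :
    0 < (star v ⬝ᵥ M.map (algebraMap ℝ ℂ) *ᵥ v).re := by
  have hM' : ∀ x, 0 ≤ x ⬝ᵥ M *ᵥ x := fun x => by
    rcases eq_or_ne x 0 with rfl | hx
    · simp
    · exact (hM x hx).le
  rw [re_star_dotProduct_map_ofReal_mulVec]
  by_cases hre : (fun i => (v i).re) = 0
  · have him : (fun i => (v i).im) ≠ 0 := fun him =>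
      hv (funext fun i => Complex.ext (congrFun hre i) (congrFun him i))
    exact add_pos_of_nonneg_of_pos (hM' _) (hM _ him)
  · exact add_pos_of_pos_of_nonneg (hM _ hre) (hM' _)

lemma IsSymm.im_star_dotProduct_map_ofReal_mulVec {M : Matrix n n ℝ} (hM : M.IsSymm)
    (v : n → ℂ) : (star v ⬝ᵥ M.map (algebraMap ℝ ℂ) *ᵥ v).im = 0 :=
  ((isHermitian_iff_isSymm.2 hM).map _ fun _ => by simp).im_star_dotProduct_mulVec_self v

lemma eq_zero_of_mulVec_eq_smul_mulVec_of_re_eq_zero {M N : Matrix n n ℝ} (hM : M.IsSymm)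
    (hN : ∀ x ≠ 0, 0 < x ⬝ᵥ N *ᵥ x) {v : n → ℂ} (hv : v ≠ 0) {z : ℂ}
    (hMN : M.map (algebraMap ℝ ℂ) *ᵥ v = z • N.map (algebraMap ℝ ℂ) *ᵥ v)
    (hz : z.re = 0) : z = 0 := by
  have hreal := hM.im_star_dotProduct_map_ofReal_mulVec v
  rw [hMN, dotProduct_smul, smul_eq_mul, Complex.mul_im, hz, zero_mul, zero_add] at hreal
  have hpos := re_star_dotProduct_map_ofReal_mulVec_pos hN hv
  exact Complex.ext hz ((mul_eq_zero.1 hreal).resolve_right hpos.ne')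

end Matrix

theorem no_purely_imaginary_eigenvalue_general (n : ℕ)
    (A B S : Matrix (Fin n) (Fin n) ℝ)
    (hSA : (S * A).IsSymm)
    (α : ℝ) (hα : 0 < α)
    (hdiss : ∀ v : Fin n → ℝ, α * (v ⬝ᵥ v) ≤ v ⬝ᵥ ((S * B) *ᵥ v)) :
    IsUnit B.det ∧
    (∀ z ∈ ((B⁻¹ * A).charpoly.map (algebraMap ℝ ℂ)).roots, z.re = 0 → z = 0) ∧
    (IsUnit A.det →
      ∀ z ∈ ((B⁻¹ * A).charpoly.map (algebraMap ℝ ℂ)).roots, z.re ≠ 0) := by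
  set f := algebraMap ℝ ℂ
  have hSB : ∀ x ≠ 0, 0 < x ⬝ᵥ (S * B) *ᵥ x := fun x hx =>
    (mul_pos hα (by simpa using dotProduct_star_self_pos_iff.2 hx)).trans_le (hdiss x)
  have hB : IsUnit B.det := (det_ne_zero_of_forall_dotProduct_mul_mulVec_pos hSB).isUnit
  have hpencil : ∀ z ∈ ((B⁻¹ * A).charpoly.map f).roots,
      ∃ v ≠ 0, A.map f *ᵥ v = z • B.map f *ᵥ v := fun z hz => by
    rw [← charpoly_map] at hz
    obtain ⟨v, hv, hMv⟩ := exists_mulVec_eq_smul_of_isRoot_charpoly (isRoot_of_mem_roots hz)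
    refine ⟨v, hv, ?_⟩
    rw [← mulVec_smul, ← hMv, mulVec_mulVec, ← Matrix.map_mul, ← mul_assoc,
      mul_nonsing_inv B hB, one_mul]
  have himag : ∀ z ∈ ((B⁻¹ * A).charpoly.map f).roots, z.re = 0 → z = 0 := by
    intro z hz hre
    obtain ⟨v, hv, hAv⟩ := hpencil z hz
    refine eq_zero_of_mulVec_eq_smul_mulVec_of_re_eq_zero hSA hSB hv ?_ hre
    rw [Matrix.map_mul, Matrix.map_mul, ← mulVec_mulVec, ← mulVec_mulVec, hAv, mulVec_smul]
  refine ⟨hB, himag, fun hA z hz hre => ?_⟩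
  obtain ⟨v, hv, hAv⟩ := hpencil z hz
  rw [himag z hz hre, zero_smul] at hAv
  have hdetA : f A.det = 0 := by
    rw [RingHom.map_det]
    exact exists_mulVec_eq_zero_iff.1 ⟨v, hv, hAv⟩
  exact hA.ne_zero ((map_eq_zero f).1 hdetA)

/-- If `S` is symmetric positive definite, `S * A` is symmetric and `B`
satisfies the dissipativity condition `vᵀ S B v ≥ α ‖v‖²` for some `α > 0`, then `B` is
invertible, every root `z` of the characteristic polynomial of `B⁻¹ * A` over `ℂ` with
`Re z = 0` satisfies `z = 0`; in particular, if `A` is invertible then every eigenvalue of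
`B⁻¹ * A` has nonzero real part. -/
theorem no_purely_imaginary_eigenvalue (n : ℕ) (hn : 1 ≤ n)
    (A B S : Matrix (Fin n) (Fin n) ℝ)
    (hS : S.PosDef)
    (hSA : (S * A).IsSymm)
    (α : ℝ) (hα : 0 < α)
    (hdiss : ∀ v : Fin n → ℝ, α * (v ⬝ᵥ v) ≤ v ⬝ᵥ ((S * B) *ᵥ v)) :
    IsUnit B.det ∧
    (∀ z ∈ ((B⁻¹ * A).charpoly.map (algebraMap ℝ ℂ)).roots, z.re = 0 → z = 0) ∧
    (IsUnit A.det →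
      ∀ z ∈ ((B⁻¹ * A).charpoly.map (algebraMap ℝ ℂ)).roots, z.re ≠ 0) :=
  no_purely_imaginary_eigenvalue_general n A B S hSA α hα hdiss
end

section
/- Let a < b < c be real numbers and let f : ℝ → ℝ be continuous on [a,c]. Suppose that the convex envelope conv_{[a,b]} f is constant on [a,b] and that the convex envelope conv_{[b,c]} f is monotone nondecreasing on [b,c]. Then the convex envelope of f on the full interval [a,c] is the glued function: conv_{[a,c]} f(τ) = conv_{[a,b]} f(τ) for every τ ∈ [a,b], and conv_{[a,c]} f(τ) = conv_{[b,c]} f(τ) for every τ ∈ [b,c]. -/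
/-!
Let `k` be the constant value of `conv_{[a,b]} f` and `E = conv_{[b,c]} f`. Envelopes of a
continuous function touch it at the endpoints of their interval, so `k = f b = E b`. Hence
`G τ = E (max τ b)` is the constant `k` on `[a,b]` and `E` on `[b,c]`; it lies below `f`, and it is
convex on `[a,c]` as a nondecreasing convex function of the convex function `max · b`. So
`G ≤ conv_{[a,c]} f`. Conversely, the envelope on `[a,c]` restricted to a subinterval is a convex
minorant of `f` there, hence lies below the envelope of that subinterval, i.e. below `G`.
-/

/-- The convex envelope of `f` on the interval `[a,b]`:
`conv_{[a,b]} f (τ) = sup { g τ : g convex on [a,b], g ≤ f on [a,b] }`. -/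
noncomputable def convEnv (a b : ℝ) (f : ℝ → ℝ) (τ : ℝ) : ℝ :=
  sSup {y : ℝ | ∃ g : ℝ → ℝ, ConvexOn ℝ (Set.Icc a b) g ∧
    (∀ z ∈ Set.Icc a b, g z ≤ f z) ∧ g τ = y}

open Set

section ConvexEnvelope

variable {a b τ : ℝ} {f : ℝ → ℝ}

lemma le_convEnv {g : ℝ → ℝ} (hg : ConvexOn ℝ (Icc a b) g) (hgf : ∀ z ∈ Icc a b, g z ≤ f z)
    (hτ : τ ∈ Icc a b) : g τ ≤ convEnv a b f τ :=
  le_csSup ⟨f τ, by rintro _ ⟨g, -, hgf, rfl⟩; exact hgf τ hτ⟩ ⟨g, hg, hgf, rfl⟩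

lemma convEnv_le_of_forall {C : ℝ} (hf : BddBelow (f '' Icc a b))
    (h : ∀ g : ℝ → ℝ, ConvexOn ℝ (Icc a b) g → (∀ z ∈ Icc a b, g z ≤ f z) → g τ ≤ C) :
    convEnv a b f τ ≤ C := by
  obtain ⟨m, hm⟩ := hf
  refine csSup_le ⟨m, fun _ => m, convexOn_const m (convex_Icc a b),
    fun z hz => hm (mem_image_of_mem f hz), rfl⟩ ?_
  rintro _ ⟨g, hg, hgf, rfl⟩
  exact h g hg hgf

lemma convEnv_le_self (hf : BddBelow (f '' Icc a b)) (hτ : τ ∈ Icc a b) :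
    convEnv a b f τ ≤ f τ :=
  convEnv_le_of_forall hf fun _ _ hgf => hgf τ hτ

lemma convexOn_convEnv (hf : BddBelow (f '' Icc a b)) : ConvexOn ℝ (Icc a b) (convEnv a b f) := by
  refine ⟨convex_Icc a b, fun x hx y hy p q hp hq hpq => convEnv_le_of_forall hf ?_⟩
  intro g hg hgf
  calc g (p • x + q • y) ≤ p • g x + q • g y := hg.2 hx hy hp hq hpq
    _ ≤ p • convEnv a b f x + q • convEnv a b f y := by
      gcongr
      exacts [le_convEnv hg hgf hx, le_convEnv hg hgf hy]

lemma convEnv_le_convEnv_of_subset {a' b' : ℝ} (h : Icc a' b' ⊆ Icc a b)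
    (hf : BddBelow (f '' Icc a b)) (hτ : τ ∈ Icc a' b') :
    convEnv a b f τ ≤ convEnv a' b' f τ :=
  le_convEnv ((convexOn_convEnv hf).subset h (convex_Icc a' b'))
    (fun _ hz => convEnv_le_self hf (h hz)) hτ

/-- `hs` holds for `x₀ = b, s = 1` and for `x₀ = a, s = -1`: then steep enough affine functions
through `(x₀, f x₀ - ε)`, decreasing towards the interior, are minorants of `f`. -/
lemma self_le_convEnv_of_abs_sub_le {s x₀ : ℝ} (hx₀ : x₀ ∈ Icc a b)
    (hs : ∀ z ∈ Icc a b, |z - x₀| ≤ s * (x₀ - z)) (hf : BddBelow (f '' Icc a b))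
    (hfx₀ : ContinuousWithinAt f (Icc a b) x₀) : f x₀ ≤ convEnv a b f x₀ := by
  refine le_of_forall_sub_le fun ε hε => ?_
  obtain ⟨δ, hδ, hnear⟩ := Metric.continuousWithinAt_iff.1 hfx₀ ε hε
  obtain ⟨m, hm⟩ := hf
  have hmf : ∀ z ∈ Icc a b, m ≤ f z := fun z hz => hm (mem_image_of_mem f hz)
  set M := (f x₀ - m) / δ
  have hM : 0 ≤ M := div_nonneg (sub_nonneg.2 (hmf x₀ hx₀)) hδ.le
  have hMδ : M * δ = f x₀ - m := div_mul_cancel₀ _ hδ.ne'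
  set g : ℝ → ℝ := fun z => (M * s) * z + (f x₀ - ε - M * s * x₀)
  have hg_le : ∀ z ∈ Icc a b, g z ≤ f z := by
    intro z hz
    have hgz : g z ≤ f x₀ - ε - M * |z - x₀| := by
      have := mul_le_mul_of_nonneg_left (hs z hz) hM
      simp only [g]
      linarith
    rcases lt_or_ge |z - x₀| δ with hzδ | hzδ
    · have hfz := (abs_lt.1 (hnear hz hzδ)).1
      linarith [mul_nonneg hM (abs_nonneg (z - x₀))]
    · linarith [mul_le_mul_of_nonneg_left hzδ hM, hmf z hz]
  calc f x₀ - ε = g x₀ := by simp only [g]; ring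
    _ ≤ convEnv a b f x₀ :=
      le_convEnv (((LinearMap.mul ℝ ℝ (M * s)).convexOn (convex_Icc a b)).add_const _) hg_le hx₀

lemma convEnv_left_endpoint (hab : a ≤ b) (hf : ContinuousOn f (Icc a b)) :
    convEnv a b f a = f a := by
  have ha : a ∈ Icc a b := left_mem_Icc.2 hab
  have hbdd := isCompact_Icc.bddBelow_image hf
  refine (convEnv_le_self hbdd ha).antisymm (self_le_convEnv_of_abs_sub_le (s := -1) ha ?_ hbdd
    (hf a ha))
  intro z hz
  rw [abs_of_nonneg (sub_nonneg.2 hz.1)]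
  linarith

lemma convEnv_right_endpoint (hab : a ≤ b) (hf : ContinuousOn f (Icc a b)) :
    convEnv a b f b = f b := by
  have hb : b ∈ Icc a b := right_mem_Icc.2 hab
  have hbdd := isCompact_Icc.bddBelow_image hf
  refine (convEnv_le_self hbdd hb).antisymm (self_le_convEnv_of_abs_sub_le (s := 1) hb ?_ hbdd
    (hf b hb))
  intro z hz
  rw [abs_of_nonpos (sub_nonpos.2 hz.2)]
  linarith

end ConvexEnvelope

lemma ConvexOn.comp_max_of_monotoneOn {a b c : ℝ} {g : ℝ → ℝ} (hg : ConvexOn ℝ (Icc b c) g)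
    (hg_mono : MonotoneOn g (Icc b c)) (hab : a ≤ b) (hbc : b ≤ c) :
    ConvexOn ℝ (Icc a c) fun τ => g (max τ b) := by
  have hmax : Continuous fun τ : ℝ => max τ b := continuous_id.max continuous_const
  have himage : (fun τ => max τ b) '' Icc a c = Icc b c := by
    rw [hmax.continuousOn.image_Icc_of_monotoneOn (hab.trans hbc)
      fun x _ y _ hxy => max_le_max hxy le_rfl, max_eq_right hab, max_eq_left hbc]
  refine ConvexOn.comp (f := fun τ => max τ b) ?_
    ((convexOn_id (convex_Icc a c)).sup (convexOn_const b (convex_Icc a c))) ?_ <;> rw [himage]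
  exacts [hg, hg_mono]

/-- gluing of convex envelopes, Step 4 of the proof of Lemma 3.2. If
`conv_{[a,b]} f` is constant on `[a,b]` and `conv_{[b,c]} f` is nondecreasing on `[b,c]`,
then the convex envelope of `f` on `[a,c]` is obtained by gluing the two envelopes. -/
theorem convEnv_glue (a b c : ℝ) (hab : a < b) (hbc : b < c) (f : ℝ → ℝ)
    (hf : ContinuousOn f (Set.Icc a c))
    (hconst : ∃ k : ℝ, ∀ τ ∈ Set.Icc a b, convEnv a b f τ = k)
    (hmono : MonotoneOn (convEnv b c f) (Set.Icc b c)) :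
    (∀ τ ∈ Set.Icc a b, convEnv a c f τ = convEnv a b f τ) ∧
    (∀ τ ∈ Set.Icc b c, convEnv a c f τ = convEnv b c f τ) := by
  obtain ⟨k, hk⟩ := hconst
  have hsub₁ : Icc a b ⊆ Icc a c := Icc_subset_Icc_right hbc.le
  have hsub₂ : Icc b c ⊆ Icc a c := Icc_subset_Icc_left hab.le
  have hbdd := isCompact_Icc.bddBelow_image hf
  have hkb : k = convEnv b c f b := by
    rw [← hk b (right_mem_Icc.2 hab.le), convEnv_right_endpoint hab.le (hf.mono hsub₁),
      convEnv_left_endpoint hbc.le (hf.mono hsub₂)]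
  set G : ℝ → ℝ := fun τ => convEnv b c f (max τ b)
  have hG_left : ∀ τ ∈ Icc a b, G τ = convEnv a b f τ := fun τ hτ => by
    simp only [G, max_eq_right hτ.2, hk τ hτ, hkb]
  have hG_right : ∀ τ ∈ Icc b c, G τ = convEnv b c f τ := fun τ hτ => by
    simp only [G, max_eq_left hτ.1]
  have hG_convex : ConvexOn ℝ (Icc a c) G :=
    (convexOn_convEnv (hbdd.mono (image_mono hsub₂))).comp_max_of_monotoneOn hmono hab.le hbc.le
  have hG_le : ∀ z ∈ Icc a c, G z ≤ f z := by
    intro z hz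
    rcases le_total z b with hzb | hbz
    · rw [hG_left z ⟨hz.1, hzb⟩]
      exact convEnv_le_self (hbdd.mono (image_mono hsub₁)) ⟨hz.1, hzb⟩
    · rw [hG_right z ⟨hbz, hz.2⟩]
      exact convEnv_le_self (hbdd.mono (image_mono hsub₂)) ⟨hbz, hz.2⟩
  refine ⟨fun τ hτ => ?_, fun τ hτ => ?_⟩
  · refine (convEnv_le_convEnv_of_subset hsub₁ hbdd hτ).antisymm ?_
    exact hG_left τ hτ ▸ le_convEnv hG_convex hG_le (hsub₁ hτ)
  · refine (convEnv_le_convEnv_of_subset hsub₂ hbdd hτ).antisymm ?_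
    exact hG_right τ hτ ▸ le_convEnv hG_convex hG_le (hsub₂ hτ)
end

section
/- Let a < b be real numbers and let g, h : [a,b] → ℝ be continuous functions, differentiable on the open interval (a,b), such that g is convex on [a,b], h is concave on [a,b], g(a) = h(a), and g(τ) ≤ h(τ) for every τ ∈ [a,b]. Then ∫ₐᵇ |g′(τ) − h′(τ)| dτ ≤ 2 · sup_{τ ∈ [a,b]} (h(τ) − g(τ)). -/
/-!
With `φ = g - h`, convex with `φ a = 0` and `φ ≤ 0`, the derivative `φ'` is monotone, so it is
negative on some `(a, c)` and nonnegative on `(c, b)`. Integrating `|φ'|` on both pieces gives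
`∫ₐᵇ |φ'| = (φ a - φ c) + (φ b - φ c) ≤ -2 φ c = 2 (h c - g c)`.
-/

open MeasureTheory Set

theorem ConvexOn.monotoneOn_of_hasDerivAt {S : Set ℝ} {f f' : ℝ → ℝ} (hfc : ConvexOn ℝ S f)
    (hf : ∀ x ∈ S, HasDerivAt f (f' x) x) : MonotoneOn f' S := by
  intro x hx y hy hxy
  rcases hxy.eq_or_lt with rfl | hxy
  · rfl
  exact (hfc.le_slope_of_hasDerivAt hx hy hxy (hf x hx)).trans
    (hfc.slope_le_of_hasDerivAt hx hy hxy (hf y hy))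

theorem MonotoneOn.exists_sign_change {α β : Type*} [ConditionallyCompleteLinearOrder α]
    [LinearOrder β] [Zero β] {f : α → β} {a b : α} (hab : a ≤ b) (hf : MonotoneOn f (Ioo a b)) :
    ∃ c ∈ Icc a b, (∀ x ∈ Ioo a c, f x < 0) ∧ ∀ x ∈ Ioo c b, 0 ≤ f x := by
  set S := insert a {x | x ∈ Ioo a b ∧ f x < 0}
  have hS : S.Nonempty := ⟨a, mem_insert a _⟩
  have hS_le : ∀ x ∈ S, x ≤ b := by
    rintro x (rfl | hx)
    exacts [hab, hx.1.2.le]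
  have hSb : BddAbove S := ⟨b, hS_le⟩
  refine ⟨sSup S, ⟨le_csSup hSb (mem_insert a _), csSup_le hS hS_le⟩, ?_, ?_⟩
  · intro x hx
    obtain ⟨y, hy, hxy⟩ := exists_lt_of_lt_csSup hS hx.2
    rcases hy with rfl | hy
    · exact absurd hx.1 hxy.not_gt
    · exact (hf ⟨hx.1, hxy.trans hy.1.2⟩ hy.1 hxy.le).trans_lt hy.2
  · intro x hx
    by_contra! hneg
    have hxS : x ∈ S := Or.inr ⟨⟨(le_csSup hSb (mem_insert a _)).trans_lt hx.1, hx.2⟩, hneg⟩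
    exact (le_csSup hSb hxS).not_gt hx.1

section DerivOfConstantSign

variable {f f' : ℝ → ℝ} {a b : ℝ}

theorem intervalIntegrable_abs_deriv_of_nonneg (hab : a ≤ b) (hcont : ContinuousOn f (Icc a b))
    (hderiv : ∀ x ∈ Ioo a b, HasDerivAt f (f' x) x) (hpos : ∀ x ∈ Ioo a b, 0 ≤ f' x) :
    IntervalIntegrable (fun x => |f' x|) volume a b :=
  ((intervalIntegrable_iff_integrableOn_Ioc_of_le hab).2
    (intervalIntegral.integrableOn_deriv_of_nonneg hcont hderiv hpos)).abs

theorem integral_abs_deriv_of_nonneg (hab : a ≤ b) (hcont : ContinuousOn f (Icc a b))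
    (hderiv : ∀ x ∈ Ioo a b, HasDerivAt f (f' x) x) (hpos : ∀ x ∈ Ioo a b, 0 ≤ f' x) :
    ∫ x in a..b, |f' x| = f b - f a := by
  rw [intervalIntegral.integral_congr_Ioo_of_le hab fun x hx => abs_of_nonneg (hpos x hx)]
  exact intervalIntegral.integral_eq_sub_of_hasDerivAt_of_le hab hcont hderiv
    ((intervalIntegrable_abs_deriv_of_nonneg hab hcont hderiv hpos).congr_uIoo
      fun x hx => abs_of_nonneg (hpos x (uIoo_of_le hab ▸ hx)))

end DerivOfConstantSign

theorem integral_abs_deriv_of_sign_change {f f' : ℝ → ℝ} {a b c : ℝ} (hac : a ≤ c) (hcb : c ≤ b)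
    (hcont : ContinuousOn f (Icc a b)) (hderiv : ∀ x ∈ Ioo a b, HasDerivAt f (f' x) x)
    (hneg : ∀ x ∈ Ioo a c, f' x ≤ 0) (hpos : ∀ x ∈ Ioo c b, 0 ≤ f' x) :
    ∫ x in a..b, |f' x| = f a + f b - 2 * f c := by
  have hcont_left : ContinuousOn (-f) (Icc a c) := (hcont.mono (Icc_subset_Icc_right hcb)).neg
  have hcont_right : ContinuousOn f (Icc c b) := hcont.mono (Icc_subset_Icc_left hac)
  have hderiv_left : ∀ x ∈ Ioo a c, HasDerivAt (-f) (-f' x) x :=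
    fun x hx => (hderiv x ⟨hx.1, hx.2.trans_le hcb⟩).neg
  have hderiv_right : ∀ x ∈ Ioo c b, HasDerivAt f (f' x) x :=
    fun x hx => hderiv x ⟨hac.trans_lt hx.1, hx.2⟩
  have hpos_left : ∀ x ∈ Ioo a c, 0 ≤ -f' x := fun x hx => neg_nonneg.2 (hneg x hx)
  have hint_left := intervalIntegrable_abs_deriv_of_nonneg hac hcont_left hderiv_left hpos_left
  have hint_right := intervalIntegrable_abs_deriv_of_nonneg hcb hcont_right hderiv_right hpos
  have hleft := integral_abs_deriv_of_nonneg hac hcont_left hderiv_left hpos_left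
  have hright := integral_abs_deriv_of_nonneg hcb hcont_right hderiv_right hpos
  simp only [abs_neg, Pi.neg_apply] at hint_left hleft
  rw [← intervalIntegral.integral_add_adjacent_intervals hint_left hint_right, hleft, hright]
  ring

/-- abstract form of the L¹ estimate (e:g3) from Step 3 of the proof of
Lemma 3.2. If `g` is convex, `h` is concave on `[a,b]`, both continuous on `[a,b]` and
differentiable on `(a,b)`, with `g(a) = h(a)` and `g ≤ h` on `[a,b]`, then
`∫ₐᵇ |g′ − h′| ≤ 2 sup_{[a,b]} (h − g)`. -/
theorem l1_estimate_deriv_convex_concave (a b : ℝ) (hab : a < b)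
    (g h g' h' : ℝ → ℝ)
    (hgc : ContinuousOn g (Set.Icc a b)) (hhc : ContinuousOn h (Set.Icc a b))
    (hgconv : ConvexOn ℝ (Set.Icc a b) g) (hhconc : ConcaveOn ℝ (Set.Icc a b) h)
    (hg' : ∀ τ ∈ Set.Ioo a b, HasDerivAt g (g' τ) τ)
    (hh' : ∀ τ ∈ Set.Ioo a b, HasDerivAt h (h' τ) τ)
    (hga : g a = h a)
    (hle : ∀ τ ∈ Set.Icc a b, g τ ≤ h τ) :
    ∫ τ in a..b, |g' τ - h' τ| ≤ 2 * sSup ((fun τ => h τ - g τ) '' Set.Icc a b) := by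
  have hderiv : ∀ τ ∈ Ioo a b, HasDerivAt (g - h) (g' τ - h' τ) τ :=
    fun τ hτ => (hg' τ hτ).sub (hh' τ hτ)
  have hmono : MonotoneOn (fun τ => g' τ - h' τ) (Ioo a b) :=
    ((hgconv.sub hhconc).subset Ioo_subset_Icc_self (convex_Ioo a b)).monotoneOn_of_hasDerivAt
      hderiv
  obtain ⟨c, hc, hneg, hpos⟩ := hmono.exists_sign_change hab.le
  have hintegral := integral_abs_deriv_of_sign_change hc.1 hc.2 (hgc.sub hhc) hderiv
    (fun τ hτ => (hneg τ hτ).le) hpos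
  have hbdd : BddAbove ((fun τ => h τ - g τ) '' Icc a b) :=
    (isCompact_Icc.image_of_continuousOn (hhc.sub hgc)).bddAbove
  have hc_le_sup : h c - g c ≤ sSup ((fun τ => h τ - g τ) '' Icc a b) :=
    le_csSup hbdd (mem_image_of_mem _ hc)
  have hb := hle b (right_mem_Icc.2 hab.le)
  simp only [Pi.sub_apply] at hintegral
  rw [hintegral]
  linarith
end
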